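/- Let (α_n)_{n∈ℤ} ⊆ 𝔻 be Verblunsky coefficients, β, β̃ ∈ ∂𝔻, a < b integers, z ∈ ℂ, and adopt the convention α_{a−1} = β, α_b = β̃ (so ρ_{a−1} = ρ_b = 0). Then the matrix A = z·(ℒ^{[a,b]}_{β,β̃})* − ℳ^{[a,b]}_{β,β̃} is tridiagonal, with diagonal entries A_{j,j} = z·α_j + α_{j−1} for j even and A_{j,j} = −z·conj(α_{j−1}) − conj(α_j) for j odd (a ≤ j ≤ b), and off-diagonal entries A_{j+1,j} = A_{j,j+1} = z·ρ_j for j even and A_{j+1,j} = A_{j,j+1} = −ρ_j for j odd (a ≤ j ≤ b−1). -/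

import Mathlib

open MeasureTheory Complex Filter
open scoped Matrix.Norms.L2Operator

noncomputable section
/-- `ρ_n = √(1 - |α_n|²)`. -/
def rhoV (α : ℤ → ℂ) (n : ℤ) : ℝ := Real.sqrt (1 - ‖α n‖^2)

/-- entries of `ℒ = ⊕_{n even} Θ_n`. -/
def cmvLent (α : ℤ → ℂ) (m k : ℤ) : ℂ :=
  if m % 2 = 0 then
    if k = m then starRingEnd ℂ (α m) else if k = m + 1 then (rhoV α m : ℂ) else 0
  else
    if k = m - 1 then (rhoV α (m-1) : ℂ) else if k = m then -α (m-1) else 0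

/-- entries of `ℳ = ⊕_{n odd} Θ_n`. -/
def cmvMent (α : ℤ → ℂ) (m k : ℤ) : ℂ :=
  if m % 2 ≠ 0 then
    if k = m then starRingEnd ℂ (α m) else if k = m + 1 then (rhoV α m : ℂ) else 0
  else
    if k = m - 1 then (rhoV α (m-1) : ℂ) else if k = m then -α (m-1) else 0

/-- Verblunsky coefficients with boundary conditions `α_{a-1} = β`, `α_b = β̃`. -/
def bcV (α : ℤ → ℂ) (β β' : ℂ) (a b : ℤ) (n : ℤ) : ℂ :=
  if n = a - 1 then β else if n = b then β' else α n

/-- the restriction `ℒ^{[a,b]}_{β,β̃}`. -/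
def cmvLmat (α : ℤ → ℂ) (β β' : ℂ) (a b : ℤ) :
    Matrix ↥(Finset.Icc a b) ↥(Finset.Icc a b) ℂ :=
  Matrix.of fun i j => cmvLent (bcV α β β' a b) (i:ℤ) (j:ℤ)

/-- the restriction `ℳ^{[a,b]}_{β,β̃}`. -/
def cmvMmat (α : ℤ → ℂ) (β β' : ℂ) (a b : ℤ) :
    Matrix ↥(Finset.Icc a b) ↥(Finset.Icc a b) ℂ :=
  Matrix.of fun i j => cmvMent (bcV α β β' a b) (i:ℤ) (j:ℤ)

/-- the restriction `ℰ^{[a,b]}_{β,β̃} = ℒ^{[a,b]}·ℳ^{[a,b]}`. -/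
def cmvEmat (α : ℤ → ℂ) (β β' : ℂ) (a b : ℤ) :
    Matrix ↥(Finset.Icc a b) ↥(Finset.Icc a b) ℂ :=
  cmvLmat α β β' a b * cmvMmat α β β' a b

/-- the matrix `z (ℒ^{[a,b]})* − ℳ^{[a,b]}`. -/
def cmvAmat (z : ℂ) (α : ℤ → ℂ) (β β' : ℂ) (a b : ℤ) :
    Matrix ↥(Finset.Icc a b) ↥(Finset.Icc a b) ℂ :=
  z • (cmvLmat α β β' a b).conjTranspose - cmvMmat α β β' a b

/-- the Green's function `G^{[a,b]}_{β,β̃}(z; k, ℓ)`. -/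
def cmvGreen (z : ℂ) (α : ℤ → ℂ) (β β' : ℂ) (a b : ℤ)
    (k l : ↥(Finset.Icc a b)) : ℂ :=
  (cmvAmat z α β β' a b)⁻¹ k l

/-- `[a,b]` is `(γ, Γ, p)`-suitable for `ℰ_{β,β̃} − z`. -/
def CmvSuitable (α : ℤ → ℂ) (β β' z : ℂ) (a b : ℤ) (γ Γ : ℝ) (p : ℤ) : Prop :=
  IsUnit (cmvEmat α β β' a b - z • (1 : Matrix ↥(Finset.Icc a b) ↥(Finset.Icc a b) ℂ)) ∧
  ‖(cmvEmat α β β' a b - z • (1 : Matrix ↥(Finset.Icc a b) ↥(Finset.Icc a b) ℂ))⁻¹‖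
    ≤ (2:ℝ)^(-p) * Real.exp Γ ∧
  ∀ k l : ↥(Finset.Icc a b), ((b:ℝ) - (a:ℝ))/2 ≤ |((k:ℤ):ℝ) - ((l:ℤ):ℝ)| →
    ‖cmvGreen z α β β' a b k l‖ ≤ (2:ℝ)^(-(p+1)) * Real.exp (-γ * |((k:ℤ):ℝ) - ((l:ℤ):ℝ)|)


open ComplexConjugate

section CMVEntries

variable (z : ℂ) (α : ℤ → ℂ)

/-- The `(m, k)` entry of `z ℒ* − ℳ` on `ℓ²(ℤ)`. -/
def cmvAent (m k : ℤ) : ℂ :=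
  z * conj (cmvLent α k m) - cmvMent α m k

theorem cmvAmat_apply (β β' : ℂ) (a b : ℤ) (k l : ↥(Finset.Icc a b)) :
    cmvAmat z α β β' a b k l = cmvAent z (bcV α β β' a b) k l := by
  simp [cmvAmat, cmvLmat, cmvMmat, cmvAent, Matrix.conjTranspose_apply]

variable {z α}

theorem cmvLent_eq_zero_of_two_le_abs {m k : ℤ} (h : 2 ≤ |m - k|) : cmvLent α m k = 0 := by
  rw [le_abs'] at h
  unfold cmvLent
  split_ifs <;> first | rfl | omega

theorem cmvMent_eq_zero_of_two_le_abs {m k : ℤ} (h : 2 ≤ |m - k|) : cmvMent α m k = 0 := by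
  rw [le_abs'] at h
  unfold cmvMent
  split_ifs <;> first | rfl | omega

theorem cmvAent_eq_zero_of_two_le_abs {m k : ℤ} (h : 2 ≤ |m - k|) : cmvAent z α m k = 0 := by
  rw [cmvAent, cmvLent_eq_zero_of_two_le_abs (abs_sub_comm m k ▸ h),
    cmvMent_eq_zero_of_two_le_abs h, map_zero, mul_zero, sub_zero]

theorem cmvAent_self_of_even {m : ℤ} (hm : m % 2 = 0) :
    cmvAent z α m m = z * α m + α (m - 1) := by
  unfold cmvAent cmvLent cmvMent
  split_ifs <;> first | omega | simp

theorem cmvAent_self_of_odd {m : ℤ} (hm : m % 2 ≠ 0) :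
    cmvAent z α m m = -z * conj (α (m - 1)) - conj (α m) := by
  unfold cmvAent cmvLent cmvMent
  split_ifs <;> first | omega | simp

theorem cmvAent_succ_self_of_even {m : ℤ} (hm : m % 2 = 0) :
    cmvAent z α (m + 1) m = z * rhoV α m := by
  have hm' : (m + 1) % 2 ≠ 0 := by omega
  unfold cmvAent cmvLent cmvMent
  split_ifs <;> first | omega | simp

theorem cmvAent_self_succ_of_even {m : ℤ} (hm : m % 2 = 0) :
    cmvAent z α m (m + 1) = z * rhoV α m := by
  have hm' : (m + 1) % 2 ≠ 0 := by omega
  unfold cmvAent cmvLent cmvMent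
  split_ifs <;> first | omega | simp [add_sub_cancel_right]

theorem cmvAent_succ_self_of_odd {m : ℤ} (hm : m % 2 ≠ 0) :
    cmvAent z α (m + 1) m = -rhoV α m := by
  have hm' : (m + 1) % 2 = 0 := by omega
  unfold cmvAent cmvLent cmvMent
  split_ifs <;> first | omega | simp [add_sub_cancel_right]

theorem cmvAent_self_succ_of_odd {m : ℤ} (hm : m % 2 ≠ 0) :
    cmvAent z α m (m + 1) = -rhoV α m := by
  have hm' : (m + 1) % 2 = 0 := by omega
  unfold cmvAent cmvLent cmvMent
  split_ifs <;> first | omega | simp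

end CMVEntries

theorem cmv_zLstar_sub_M_tridiagonal_general
    (α : ℤ → ℂ) (β β' : ℂ) (a b : ℤ) (z : ℂ) :
    (∀ k l : ↥(Finset.Icc a b), 2 ≤ |(k:ℤ) - (l:ℤ)| →
      cmvAmat z α β β' a b k l = 0) ∧
    (∀ j : ↥(Finset.Icc a b),
      ((j:ℤ) % 2 = 0 → cmvAmat z α β β' a b j j
          = z * bcV α β β' a b (j:ℤ) + bcV α β β' a b ((j:ℤ) - 1)) ∧
      ((j:ℤ) % 2 ≠ 0 → cmvAmat z α β β' a b j j
          = -z * starRingEnd ℂ (bcV α β β' a b ((j:ℤ) - 1))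
            - starRingEnd ℂ (bcV α β β' a b (j:ℤ)))) ∧
    (∀ j j1 : ↥(Finset.Icc a b), (j1:ℤ) = (j:ℤ) + 1 →
      ((j:ℤ) % 2 = 0 →
        cmvAmat z α β β' a b j1 j = z * (rhoV (bcV α β β' a b) (j:ℤ) : ℂ) ∧
        cmvAmat z α β β' a b j j1 = z * (rhoV (bcV α β β' a b) (j:ℤ) : ℂ)) ∧
      ((j:ℤ) % 2 ≠ 0 →
        cmvAmat z α β β' a b j1 j = -((rhoV (bcV α β β' a b) (j:ℤ) : ℂ)) ∧
        cmvAmat z α β β' a b j j1 = -((rhoV (bcV α β β' a b) (j:ℤ) : ℂ)))) := by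
  simp only [cmvAmat_apply]
  refine ⟨fun k l h => cmvAent_eq_zero_of_two_le_abs h,
    fun j => ⟨cmvAent_self_of_even, cmvAent_self_of_odd⟩, fun j j1 h => ?_⟩
  rw [h]
  exact ⟨fun hj => ⟨cmvAent_succ_self_of_even hj, cmvAent_self_succ_of_even hj⟩,
    fun hj => ⟨cmvAent_succ_self_of_odd hj, cmvAent_self_succ_of_odd hj⟩⟩

/-- the matrix `A = z (ℒ^{[a,b]}_{β,β̃})* − ℳ^{[a,b]}_{β,β̃}` is tridiagonal,
with the stated diagonal and off-diagonal entries (with the convention `α_{a-1} = β`,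
`α_b = β̃`). -/
theorem cmv_zLstar_sub_M_tridiagonal
    (α : ℤ → ℂ) (hα : ∀ n, ‖α n‖ < 1) (β β' : ℂ) (hβ : ‖β‖ = 1) (hβ' : ‖β'‖ = 1)
    (a b : ℤ) (hab : a < b) (z : ℂ) :
    (∀ k l : ↥(Finset.Icc a b), 2 ≤ |(k:ℤ) - (l:ℤ)| →
      cmvAmat z α β β' a b k l = 0) ∧
    (∀ j : ↥(Finset.Icc a b),
      ((j:ℤ) % 2 = 0 → cmvAmat z α β β' a b j j
          = z * bcV α β β' a b (j:ℤ) + bcV α β β' a b ((j:ℤ) - 1)) ∧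
      ((j:ℤ) % 2 ≠ 0 → cmvAmat z α β β' a b j j
          = -z * starRingEnd ℂ (bcV α β β' a b ((j:ℤ) - 1))
            - starRingEnd ℂ (bcV α β β' a b (j:ℤ)))) ∧
    (∀ j j1 : ↥(Finset.Icc a b), (j1:ℤ) = (j:ℤ) + 1 →
      ((j:ℤ) % 2 = 0 →
        cmvAmat z α β β' a b j1 j = z * (rhoV (bcV α β β' a b) (j:ℤ) : ℂ) ∧
        cmvAmat z α β β' a b j j1 = z * (rhoV (bcV α β β' a b) (j:ℤ) : ℂ)) ∧
      ((j:ℤ) % 2 ≠ 0 →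
        cmvAmat z α β β' a b j1 j = -((rhoV (bcV α β β' a b) (j:ℤ) : ℂ)) ∧
        cmvAmat z α β β' a b j j1 = -((rhoV (bcV α β β' a b) (j:ℤ) : ℂ)))) :=
  cmv_zLstar_sub_M_tridiagonal_general α β β' a b z
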